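/- arXiv:1801.01925 — 6 statements merged into one kernel-verified Lean document; each statement's English description precedes it below -/
import Mathlib

section
/- Let λ = ζ(3/2)/(2ζ(3)). For all real numbers x > y > 8, the number of primitive nondeficient numbers n ≤ x whose square-full part satisfies s(n) ≥ y is at most λ·x·y^(−1/2) + 2·x·y^(−2/3). -/
open ArithmeticFunction
open scoped ArithmeticFunction.sigma

/-- A positive integer `n` is nondeficient if `σ n ≥ 2n`; it is a primitive
nondeficient number (pnd) if moreover every proper divisor is deficient. -/
def Pnd (n : ℕ) : Prop :=
  0 < n ∧ 2 * n ≤ σ 1 n ∧ ∀ d : ℕ, d ∣ n → d < n → σ 1 d < 2 * d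

/-- The square-full part `s(n)` of `n`: the product of the prime powers
`p ^ (v_p(n))` over primes `p` with `v_p(n) ≥ 2`.  Then `n = q * sqfullPart n`
with `q` squarefree, `sqfullPart n` square-full and `gcd(q, sqfullPart n) = 1`. -/
def sqfullPart (n : ℕ) : ℕ :=
  ∏ p ∈ n.primeFactors.filter (fun p => 2 ≤ n.factorization p), p ^ n.factorization p

/-!
Write a pnd `n` as `2 ^ k * o * s(n)` with `o` odd. Two pnds with the same square-full part and
the same `o` divide one another, hence coincide; so at most `(x / s + 1) / 2` pnds `n ≤ x` have
`s(n) = s`. Every square-full `s` is `b ^ 3 * a ^ 2` with `b` squarefree. For fixed `b`, summing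
`(x / (b ^ 3 a ^ 2) + 1) / 2` over the `a` with `y ≤ b ^ 3 a ^ 2 ≤ x` gives at most `x / b ^ 3` if
`b ^ 3 ≥ y`, and at most `x / (2 √(b ^ 3 y)) + x / y` otherwise. The terms `x / b ^ 3` and `x / y`
add up to at most `2 x y ^ (-2/3)`; the rest is `x / (2 √y)` times `∑ b ^ (-3/2)` over squarefree
`b`, which the injection `(b, m) ↦ b m²` bounds by `ζ(3/2) / ζ(3)`.
-/

open Finset

theorem Pnd.eq_of_dvd {a b : ℕ} (ha : Pnd a) (hb : Pnd b) (h : a ∣ b) : a = b := by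
  by_contra hne
  exact (hb.2.2 a h (lt_of_le_of_ne (Nat.le_of_dvd hb.1 h) hne)).not_ge ha.2.1

theorem Nat.dvd_or_dvd_of_ordCompl_eq {p m n : ℕ} (h : ordCompl[p] m = ordCompl[p] n) :
    m ∣ n ∨ n ∣ m := by
  rw [← Nat.ordProj_mul_ordCompl_eq_self m p, ← Nat.ordProj_mul_ordCompl_eq_self n p, h]
  rcases le_total (m.factorization p) (n.factorization p) with hle | hle
  · exact .inl (mul_dvd_mul_right (pow_dvd_pow p hle) _)
  · exact .inr (mul_dvd_mul_right (pow_dvd_pow p hle) _)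

theorem Pnd.eq_of_ordCompl_two_eq {s m n : ℕ} (hm : Pnd (s * m)) (hn : Pnd (s * n))
    (h : ordCompl[2] m = ordCompl[2] n) : m = n := by
  have hs : 0 < s := Nat.pos_of_mul_pos_right hm.1
  rcases Nat.dvd_or_dvd_of_ordCompl_eq h with hd | hd
  · exact Nat.eq_of_mul_eq_mul_left hs (hm.eq_of_dvd hn (mul_dvd_mul_left s hd))
  · exact (Nat.eq_of_mul_eq_mul_left hs (hn.eq_of_dvd hm (mul_dvd_mul_left s hd))).symm

theorem card_le_of_forall_odd_le {K : ℝ} (hK : 0 ≤ K) {A : Finset ℕ}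
    (hA : ∀ a ∈ A, Odd a ∧ (a : ℝ) ≤ K) : (#A : ℝ) ≤ (K + 1) / 2 := by
  have hcard : #A ≤ #(range ⌊(K + 1) / 2⌋₊) := by
    refine card_le_card_of_injOn (· / 2) (fun a ha => ?_) fun a ha b hb hab => ?_
    · obtain ⟨⟨j, rfl⟩, haK⟩ := hA a ha
      rw [coe_range, Set.mem_Iio, Nat.lt_iff_add_one_le, Nat.le_floor_iff (by positivity)]
      push_cast at haK
      have hj : (2 * j + 1) / 2 = j := by omega
      simp only [hj, Nat.cast_add, Nat.cast_one]
      linarith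
    · obtain ⟨⟨i, rfl⟩, -⟩ := hA a ha
      obtain ⟨⟨j, rfl⟩, -⟩ := hA b hb
      simp only at hab
      omega
  rw [card_range] at hcard
  exact (Nat.cast_le.2 hcard).trans (Nat.floor_le (by positivity))

theorem sqfullPart_dvd (n : ℕ) : sqfullPart n ∣ n := by
  rcases eq_or_ne n 0 with rfl | hn
  · exact dvd_zero _
  conv_rhs => rw [Nat.prod_primeFactors_pow_factorization hn]
  exact prod_dvd_prod_of_subset _ _ _ (filter_subset _ _)

theorem exists_sqfullPart_eq_cube_mul_sq (n : ℕ) :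
    ∃ b a : ℕ, Squarefree b ∧ 0 < a ∧ b ^ 3 * a ^ 2 = sqfullPart n := by
  set F := n.primeFactors.filter (fun p => 2 ≤ n.factorization p)
  have hprime : ∀ p ∈ F, p.Prime := fun p hp => Nat.prime_of_mem_primeFactors (mem_filter.1 hp).1
  refine ⟨∏ p ∈ F, p ^ (n.factorization p % 2),
    ∏ p ∈ F, p ^ ((n.factorization p - 3 * (n.factorization p % 2)) / 2), ?_,
    prod_pos fun p hp => pow_pos (hprime p hp).pos _, ?_⟩
  · have hrad : Squarefree (∏ p ∈ F, p) :=
      squarefree_prod_of_pairwise_isCoprime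
        (fun p hp q hq hpq => Nat.coprime_iff_isRelPrime.1
          ((Nat.coprime_primes (hprime p hp) (hprime q hq)).2 hpq))
        fun p hp => (hprime p hp).prime.squarefree
    refine hrad.squarefree_of_dvd (prod_dvd_prod_of_dvd _ _ fun p _ => ?_)
    simpa using pow_dvd_pow p (Nat.le_of_lt_succ (Nat.mod_lt _ two_pos))
  · rw [← prod_pow, ← prod_pow, ← prod_mul_distrib]
    refine prod_congr rfl fun p hp => ?_
    have := (mem_filter.1 hp).2
    rw [← pow_mul, ← pow_mul, ← pow_add]
    congr 1
    omega

theorem card_pnd_le_of_sqfullPart_eq {x : ℝ} (hx : 0 ≤ x) {s : ℕ} {F : Finset ℕ}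
    (hF : ∀ n ∈ F, Pnd n ∧ sqfullPart n = s ∧ (n : ℝ) ≤ x) : (#F : ℝ) ≤ (x / s + 1) / 2 := by
  have hdecomp : ∀ n ∈ F, s * (n / s) = n := fun n hn =>
    Nat.mul_div_cancel' ((hF n hn).2.1 ▸ sqfullPart_dvd n)
  have hinj : Set.InjOn (fun n => ordCompl[2] (n / s)) F := by
    intro m hm n hn hmn
    have := Pnd.eq_of_ordCompl_two_eq ((hdecomp m hm).symm ▸ (hF m hm).1)
      ((hdecomp n hn).symm ▸ (hF n hn).1) hmn
    rw [← hdecomp m hm, ← hdecomp n hn, this]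
  rw [← card_image_of_injOn hinj]
  refine card_le_of_forall_odd_le (by positivity) fun o ho => ?_
  obtain ⟨n, hn, rfl⟩ := mem_image.1 ho
  obtain ⟨hpnd, rfl, hnx⟩ := hF n hn
  have hs : 0 < sqfullPart n := Nat.pos_of_dvd_of_pos (sqfullPart_dvd n) hpnd.1
  have hq : n / sqfullPart n ≠ 0 :=
    (Nat.div_pos (Nat.le_of_dvd hpnd.1 (sqfullPart_dvd n)) hs).ne'
  refine ⟨Nat.coprime_two_left.1 (Nat.coprime_ordCompl Nat.prime_two hq), ?_⟩
  calc ((ordCompl[2] (n / sqfullPart n) : ℕ) : ℝ) ≤ ((n / sqfullPart n : ℕ) : ℝ) :=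
        Nat.cast_le.2 (Nat.ordCompl_le _ _)
    _ = n / sqfullPart n := Nat.cast_div (sqfullPart_dvd n) (by positivity)
    _ ≤ x / sqfullPart n := by gcongr

theorem card_pnd_le_ite {x y : ℝ} (hx : 0 ≤ x) {s : ℕ} {F : Finset ℕ}
    (hF : ∀ n ∈ F, Pnd n ∧ sqfullPart n = s ∧ (n : ℝ) ≤ x ∧ y ≤ (s : ℝ)) :
    (#F : ℝ) ≤ if y ≤ (s : ℝ) ∧ (s : ℝ) ≤ x then (x / s + 1) / 2 else 0 := by
  rcases F.eq_empty_or_nonempty with rfl | ⟨n, hn⟩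
  · rw [card_empty, Nat.cast_zero]
    split_ifs <;> positivity
  obtain ⟨hpnd, rfl, hnx, hys⟩ := hF n hn
  have hsx : (sqfullPart n : ℝ) ≤ x :=
    (Nat.cast_le.2 (Nat.le_of_dvd hpnd.1 (sqfullPart_dvd n))).trans hnx
  rw [if_pos ⟨hys, hsx⟩]
  exact card_pnd_le_of_sqfullPart_eq hx fun m hm => (hF m hm).imp_right fun h => ⟨h.1, h.2.1⟩

theorem ncard_pnd_le_sum_cube_mul_sq {x y : ℝ} (hx : 0 ≤ x) :
    ({n : ℕ | Pnd n ∧ (n : ℝ) ≤ x ∧ y ≤ (sqfullPart n : ℝ)}.ncard : ℝ) ≤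
      ∑ b ∈ Icc 1 ⌊x⌋₊ with Squarefree b, ∑ a ∈ Icc 1 ⌊x⌋₊ with
        y ≤ (b : ℝ) ^ 3 * ((a : ℕ) : ℝ) ^ 2 ∧ (b : ℝ) ^ 3 * (a : ℝ) ^ 2 ≤ x,
          (x / ((b : ℝ) ^ 3 * (a : ℝ) ^ 2) + 1) / 2 := by
  classical
  choose β α hβ hα hβα using exists_sqfullPart_eq_cube_mul_sq
  set S := {n ∈ Icc 1 ⌊x⌋₊ | Pnd n ∧ y ≤ (sqfullPart n : ℝ)}
  have hS : {n : ℕ | Pnd n ∧ (n : ℝ) ≤ x ∧ y ≤ (sqfullPart n : ℝ)} = S := by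
    ext n
    simp only [Set.mem_ofPred_eq, coe_filter, mem_Icc, S, Nat.le_floor_iff hx]
    exact ⟨fun ⟨hp, hnx, hy⟩ => ⟨⟨hp.1, hnx⟩, hp, hy⟩, fun ⟨⟨_, hnx⟩, hp, hy⟩ => ⟨hp, hnx, hy⟩⟩
  have hmaps : ∀ n ∈ S, (β n, α n) ∈ {b ∈ Icc 1 ⌊x⌋₊ | Squarefree b} ×ˢ Icc 1 ⌊x⌋₊ := by
    intro n hn
    obtain ⟨hnx, hpnd, -⟩ := mem_filter.1 hn
    have hsx : β n ^ 3 * α n ^ 2 ≤ ⌊x⌋₊ :=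
      (hβα n).symm ▸ (Nat.le_of_dvd hpnd.1 (sqfullPart_dvd n)).trans (mem_Icc.1 hnx).2
    have hpos : 0 < β n ^ 3 * α n ^ 2 := by positivity [(hβ n).ne_zero, (hα n).ne']
    have hb : β n ≤ β n ^ 3 * α n ^ 2 :=
      Nat.le_of_dvd hpos (dvd_mul_of_dvd_left (dvd_pow_self _ three_ne_zero) _)
    have ha : α n ≤ β n ^ 3 * α n ^ 2 :=
      Nat.le_of_dvd hpos (dvd_mul_of_dvd_right (dvd_pow_self _ two_ne_zero) _)
    simp only [mem_product, mem_filter, mem_Icc]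
    exact ⟨⟨⟨Nat.pos_of_ne_zero (hβ n).ne_zero, hb.trans hsx⟩, hβ n⟩, hα n, ha.trans hsx⟩
  rw [hS, Set.ncard_coe_finset, card_eq_sum_card_fiberwise hmaps, Nat.cast_sum, sum_product]
  refine sum_le_sum fun b _ => ?_
  rw [sum_filter]
  refine sum_le_sum fun a _ => ?_
  have := card_pnd_le_ite (y := y) (s := b ^ 3 * a ^ 2) hx (F := {n ∈ S | (β n, α n) = (b, a)})
    fun n hn => by
      obtain ⟨hnS, hnba⟩ := mem_filter.1 hn
      obtain ⟨hnx, hpnd, hys⟩ := mem_filter.1 hnS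
      obtain ⟨rfl, rfl⟩ := Prod.ext_iff.1 hnba
      exact ⟨hpnd, (hβα n).symm, (Nat.le_floor_iff hx).1 (mem_Icc.1 hnx).2, hβα n ▸ hys⟩
  push_cast at this
  exact this

theorem sum_Ioc_inv_sq_le {m M : ℕ} (hm : 0 < m) (hmM : m ≤ M) :
    ∑ a ∈ Ioc m M, ((a : ℝ) ^ 2)⁻¹ ≤ (m : ℝ)⁻¹ - (M : ℝ)⁻¹ := by
  induction M, hmM using Nat.le_induction with
  | base => simp
  | succ M hmM ih =>
    rw [sum_Ioc_succ_top (by omega)]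
    have hM : (0 : ℝ) < M := by exact_mod_cast hm.trans_le hmM
    have step : (M : ℝ)⁻¹ - ((M : ℝ) + 1)⁻¹ - (((M : ℝ) + 1) ^ 2)⁻¹ = (M * (M + 1) ^ 2 : ℝ)⁻¹ := by
      field_simp
      ring
    push_cast
    linarith [inv_nonneg.2 (by positivity : (0 : ℝ) ≤ M * (M + 1) ^ 2)]

theorem sum_Ico_inv_cube_le {m N : ℕ} (hm : 2 ≤ m) (hmN : m ≤ N) :
    ∑ b ∈ Ico m N, ((b : ℝ) ^ 3)⁻¹ ≤ ((m : ℝ) ^ 2)⁻¹ - ((N : ℝ) ^ 2)⁻¹ := by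
  induction N, hmN using Nat.le_induction with
  | base => simp
  | succ N hmN ih =>
    rw [sum_Ico_succ_top hmN]
    have hN : (2 : ℝ) ≤ N := by exact_mod_cast hm.trans hmN
    have step : ((N : ℝ) ^ 2)⁻¹ - (((N : ℝ) + 1) ^ 2)⁻¹ - ((N : ℝ) ^ 3)⁻¹ =
        (N ^ 2 - N - 1) / (N ^ 3 * (N + 1) ^ 2) := by
      field_simp
      ring
    have : 0 ≤ ((N : ℝ) ^ 2 - N - 1) / (N ^ 3 * (N + 1) ^ 2) :=
      div_nonneg (by nlinarith) (by positivity)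
    push_cast
    linarith

theorem sum_Ioc_div_sq_add_one_div_two_le {K : ℝ} {m M : ℕ} (hm : 0 < m) (hmM : m ≤ M)
    (hMK : (M : ℝ) ^ 2 ≤ K) :
    ∑ a ∈ Ioc m M, (K / (a : ℝ) ^ 2 + 1) / 2 ≤ K / (2 * m) - m / 2 := by
  have hM : (0 : ℝ) < M := by exact_mod_cast hm.trans_le hmM
  have hK : 0 ≤ K := (sq_nonneg _).trans hMK
  have hsplit : ∑ a ∈ Ioc m M, (K / (a : ℝ) ^ 2 + 1) / 2 =
      K / 2 * ∑ a ∈ Ioc m M, ((a : ℝ) ^ 2)⁻¹ + ((M : ℝ) - m) / 2 := by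
    simp only [add_div, sum_add_distrib, sum_const, Nat.card_Ioc, nsmul_eq_mul, mul_sum,
      Nat.cast_sub hmM]
    congr 1
    · exact sum_congr rfl fun a _ => by ring
    · ring
  have hMK' : (M : ℝ) / 2 ≤ K / (2 * M) := by
    rw [div_le_div_iff₀ two_pos (by positivity)]
    nlinarith
  have := mul_le_mul_of_nonneg_left (sum_Ioc_inv_sq_le hm hmM) (div_nonneg hK two_pos.le)
  rw [hsplit]
  calc _ ≤ K / 2 * ((m : ℝ)⁻¹ - (M : ℝ)⁻¹) + ((M : ℝ) - m) / 2 := by linarith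
    _ = K / (2 * m) - K / (2 * M) + M / 2 - m / 2 := by ring
    _ ≤ K / (2 * m) - m / 2 := by linarith

theorem Nat.le_floor_sqrt_iff {K : ℝ} (hK : 0 ≤ K) {a : ℕ} : a ≤ ⌊√K⌋₊ ↔ (a : ℝ) ^ 2 ≤ K := by
  rw [Nat.le_floor_iff (Real.sqrt_nonneg K), Real.le_sqrt (Nat.cast_nonneg a) hK]

theorem sum_div_sq_add_one_div_two_le {K : ℝ} (hK : 0 ≤ K) (A : Finset ℕ) :
    ∑ a ∈ A with 0 < a ∧ ((a : ℕ) : ℝ) ^ 2 ≤ K, (K / (a : ℝ) ^ 2 + 1) / 2 ≤ K := by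
  set M := ⌊√K⌋₊
  have hsub : {a ∈ A | 0 < a ∧ ((a : ℕ) : ℝ) ^ 2 ≤ K} ⊆ Icc 1 M := fun a ha => by
    obtain ⟨-, ha0, haK⟩ := mem_filter.1 ha
    exact mem_Icc.2 ⟨ha0, (Nat.le_floor_sqrt_iff hK).2 haK⟩
  refine (sum_le_sum_of_subset_of_nonneg hsub fun _ _ _ => by positivity).trans ?_
  rcases Nat.eq_zero_or_pos M with hM | hM
  · simp [hM, hK]
  rw [Icc_eq_cons_Ioc hM, sum_cons]
  have := sum_Ioc_div_sq_add_one_div_two_le one_pos hM ((Nat.le_floor_sqrt_iff hK).1 le_rfl)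
  norm_num at this ⊢
  linarith

theorem sum_div_sq_add_one_div_two_le_of_one_lt {K t : ℝ} (hK : 0 ≤ K) (ht : 1 < t)
    (A : Finset ℕ) :
    ∑ a ∈ A with t ≤ ((a : ℕ) : ℝ) ∧ (a : ℝ) ^ 2 ≤ K, (K / (a : ℝ) ^ 2 + 1) / 2 ≤
      K / (2 * t) + K / t ^ 2 := by
  set m := ⌈t⌉₊ - 1
  set M := ⌊√K⌋₊
  have hceil : t ≤ ⌈t⌉₊ := Nat.le_ceil t
  have hm : 1 ≤ m := by
    have : 1 < ⌈t⌉₊ := Nat.lt_ceil.2 (by exact_mod_cast ht)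
    omega
  have hsub : {a ∈ A | t ≤ ((a : ℕ) : ℝ) ∧ (a : ℝ) ^ 2 ≤ K} ⊆ Ioc m M := fun a ha => by
    obtain ⟨-, hta, haK⟩ := mem_filter.1 ha
    have : ⌈t⌉₊ ≤ a := Nat.ceil_le.2 hta
    exact mem_Ioc.2 ⟨by omega, (Nat.le_floor_sqrt_iff hK).2 haK⟩
  refine (sum_le_sum_of_subset_of_nonneg hsub fun _ _ _ => by positivity).trans ?_
  rcases le_or_gt M m with hMm | hmM
  · rw [Ioc_eq_empty_of_le hMm, sum_empty]
    positivity
  -- `m ≥ max 1 (t - 1)`, which gives `1 / m ≤ 1 / t + 2 / t ^ 2`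
  have hmt : t ^ 2 ≤ (t + 2) * m := by
    have hm1 : (1 : ℝ) ≤ m := by exact_mod_cast hm
    have htm : t - 1 ≤ m := by
      have : ((⌈t⌉₊ - 1 : ℕ) : ℝ) = ⌈t⌉₊ - 1 := by
        rw [Nat.cast_sub (by omega), Nat.cast_one]
      rw [this]
      linarith
    rcases le_total t 2 with h | h <;> nlinarith
  calc _ ≤ K / (2 * m) - m / 2 :=
        sum_Ioc_div_sq_add_one_div_two_le hm hmM.le ((Nat.le_floor_sqrt_iff hK).1 le_rfl)
    _ ≤ K / (2 * m) := by linarith [(by positivity : (0 : ℝ) ≤ m / 2)]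
    _ ≤ K * (t + 2) / (2 * t ^ 2) := by
        rw [div_le_div_iff₀ (by positivity) (by positivity)]
        nlinarith
    _ = K / (2 * t) + K / t ^ 2 := by field_simp

theorem sum_div_mul_sq_add_one_div_two_le {x y c : ℝ} (hx : 0 ≤ x) (hy : 0 < y) (hc : 0 < c)
    (A : Finset ℕ) :
    ∑ a ∈ A with y ≤ c * ((a : ℕ) : ℝ) ^ 2 ∧ c * (a : ℝ) ^ 2 ≤ x, (x / (c * (a : ℝ) ^ 2) + 1) / 2 ≤
      x / (2 * √y * √c) + x * (if y ≤ c then c⁻¹ else y⁻¹) := by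
  have hK : 0 ≤ x / c := by positivity
  have hxc : ∀ a : ℕ, c * (a : ℝ) ^ 2 ≤ x ↔ (a : ℝ) ^ 2 ≤ x / c := fun a => by
    rw [le_div_iff₀ hc, mul_comm]
  have hdiv : ∀ a : ℕ, (x / (c * (a : ℝ) ^ 2) + 1) / 2 = (x / c / (a : ℝ) ^ 2 + 1) / 2 :=
    fun a => by rw [div_div]
  simp_rw [hdiv]
  split_ifs with hyc
  · have hsub : {a ∈ A | y ≤ c * ((a : ℕ) : ℝ) ^ 2 ∧ c * (a : ℝ) ^ 2 ≤ x} ⊆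
        {a ∈ A | 0 < a ∧ ((a : ℕ) : ℝ) ^ 2 ≤ x / c} := fun a ha => by
      obtain ⟨haA, hya, hax⟩ := mem_filter.1 ha
      refine mem_filter.2 ⟨haA, Nat.pos_of_ne_zero fun h0 => ?_, (hxc a).1 hax⟩
      simp only [h0, Nat.cast_zero] at hya
      linarith
    calc _ ≤ _ := sum_le_sum_of_subset_of_nonneg hsub fun _ _ _ => by positivity
      _ ≤ x / c := sum_div_sq_add_one_div_two_le hK A
      _ ≤ _ := by rw [div_eq_mul_inv]; linarith [(by positivity : 0 ≤ x / (2 * √y * √c))]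
  · have hyc' : 1 < y / c := (one_lt_div hc).2 (not_le.1 hyc)
    have hsub : {a ∈ A | y ≤ c * ((a : ℕ) : ℝ) ^ 2 ∧ c * (a : ℝ) ^ 2 ≤ x} ⊆
        {a ∈ A | √(y / c) ≤ ((a : ℕ) : ℝ) ∧ (a : ℝ) ^ 2 ≤ x / c} := fun a ha => by
      obtain ⟨haA, hya, hax⟩ := mem_filter.1 ha
      refine mem_filter.2 ⟨haA, ?_, (hxc a).1 hax⟩
      rw [Real.sqrt_le_left (Nat.cast_nonneg a), div_le_iff₀ hc, mul_comm]
      exact hya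
    calc _ ≤ _ := sum_le_sum_of_subset_of_nonneg hsub fun _ _ _ => by positivity
      _ ≤ x / c / (2 * √(y / c)) + x / c / √(y / c) ^ 2 :=
        sum_div_sq_add_one_div_two_le_of_one_lt hK
          (Real.lt_sqrt zero_le_one |>.2 (by simpa using hyc')) A
      _ = _ := by
        rw [Real.sq_sqrt (by positivity), Real.sqrt_div hy.le]
        field_simp
        linear_combination x * y * Real.mul_self_sqrt hc.le

theorem ite_squarefree_sum_div_cube_mul_sq_le {x y : ℝ} (hx : 0 ≤ x) (hy : 0 < y) {b : ℕ}
    (hb : 0 < b) (A : Finset ℕ) :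
    (if Squarefree b then ∑ a ∈ A with y ≤ (b : ℝ) ^ 3 * ((a : ℕ) : ℝ) ^ 2 ∧
        (b : ℝ) ^ 3 * (a : ℝ) ^ 2 ≤ x, (x / ((b : ℝ) ^ 3 * (a : ℝ) ^ 2) + 1) / 2 else 0) ≤
      x / (2 * √y) * (if Squarefree b then ((b : ℝ) ^ (3 / 2 : ℝ))⁻¹ else 0) +
        x * (if y ≤ (b : ℝ) ^ 3 then ((b : ℝ) ^ 3)⁻¹ else y⁻¹) := by
  have hb0 : (0 : ℝ) < b := by exact_mod_cast hb
  by_cases hsq : Squarefree b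
  · rw [if_pos hsq, if_pos hsq]
    have hcube : √((b : ℝ) ^ 3) = (b : ℝ) ^ (3 / 2 : ℝ) := by
      rw [Real.sqrt_eq_rpow, ← Real.rpow_natCast, ← Real.rpow_mul hb0.le]
      norm_num
    convert sum_div_mul_sq_add_one_div_two_le hx hy (pow_pos hb0 3) A using 2
    rw [hcube]
    field_simp
  · rw [if_neg hsq, if_neg hsq, mul_zero, zero_add]
    split_ifs <;> positivity

theorem sum_ite_inv_cube_le {y : ℝ} (hy : 8 < y) (N : ℕ) :
    ∑ b ∈ Icc 1 N, (if y ≤ (b : ℝ) ^ 3 then ((b : ℝ) ^ 3)⁻¹ else y⁻¹) ≤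
      2 * y ^ (-(2 / 3 : ℝ)) := by
  have hy0 : 0 < y := by linarith
  set u := y ^ (3⁻¹ : ℝ)
  have hu0 : 0 < u := by positivity
  have hu3 : u ^ 3 = y := by
    rw [← Real.rpow_natCast, ← Real.rpow_mul hy0.le]
    norm_num
  have hu : 2 < u := by
    rw [← pow_lt_pow_iff_left₀ zero_le_two hu0.le three_ne_zero, hu3]
    linarith
  have hyu : y ^ (-(2 / 3 : ℝ)) = (u ^ 2)⁻¹ := by
    rw [show (-(2 / 3 : ℝ)) = 3⁻¹ * ((-2 : ℤ) : ℝ) by norm_num, Real.rpow_mul hy0.le,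
      Real.rpow_intCast, zpow_neg, zpow_ofNat]
  have hiff : ∀ b : ℕ, y ≤ (b : ℝ) ^ 3 ↔ u ≤ b := fun b => by
    rw [← hu3]
    exact pow_le_pow_iff_left₀ hu0.le (Nat.cast_nonneg b) three_ne_zero
  simp_rw [hiff]
  rw [sum_ite, sum_const, nsmul_eq_mul, hyu]
  have htail : ∑ b ∈ Icc 1 N with u ≤ ((b : ℕ) : ℝ), ((b : ℝ) ^ 3)⁻¹ ≤ (u ^ 2)⁻¹ := by
    have hsub : {b ∈ Icc 1 N | u ≤ ((b : ℕ) : ℝ)} ⊆ Ico ⌈u⌉₊ (N + 1) := fun b hb => by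
      obtain ⟨hbN, hub⟩ := mem_filter.1 hb
      exact mem_Ico.2 ⟨Nat.ceil_le.2 hub, Nat.lt_succ_of_le (mem_Icc.1 hbN).2⟩
    have hm : 2 ≤ ⌈u⌉₊ := (Nat.lt_ceil.2 (by exact_mod_cast hu)).le
    calc _ ≤ ∑ b ∈ Ico ⌈u⌉₊ (N + 1), ((b : ℝ) ^ 3)⁻¹ :=
          sum_le_sum_of_subset_of_nonneg hsub fun _ _ _ => by positivity
      _ ≤ ((⌈u⌉₊ : ℝ) ^ 2)⁻¹ := by
          rcases le_or_gt ⌈u⌉₊ (N + 1) with h | h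
          · linarith [sum_Ico_inv_cube_le hm h, inv_nonneg.2 (sq_nonneg ((N + 1 : ℕ) : ℝ))]
          · rw [Ico_eq_empty_of_le h.le, sum_empty]
            positivity
      _ ≤ (u ^ 2)⁻¹ := inv_anti₀ (by positivity) (pow_le_pow_left₀ hu0.le (Nat.le_ceil u) 2)
  have hcount : (#{b ∈ Icc 1 N | ¬ u ≤ ((b : ℕ) : ℝ)} : ℝ) ≤ u := by
    have hsub : {b ∈ Icc 1 N | ¬ u ≤ ((b : ℕ) : ℝ)} ⊆ Icc 1 ⌊u⌋₊ := fun b hb => by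
      obtain ⟨hbN, hub⟩ := mem_filter.1 hb
      exact mem_Icc.2 ⟨(mem_Icc.1 hbN).1, Nat.le_floor (not_le.1 hub).le⟩
    calc (#{b ∈ Icc 1 N | ¬ u ≤ ((b : ℕ) : ℝ)} : ℝ) ≤ ⌊u⌋₊ := by
          exact_mod_cast (card_le_card hsub).trans (by simp)
      _ ≤ u := Nat.floor_le hu0.le
  have : u * y⁻¹ = (u ^ 2)⁻¹ := by
    rw [← hu3]
    field_simp
  nlinarith [inv_nonneg.2 hy0.le]

theorem Nat.eq_of_squarefree_mul_sq_eq {b₁ b₂ m₁ m₂ : ℕ} (h₁ : Squarefree b₁) (h₂ : Squarefree b₂)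
    (hm₁ : m₁ ≠ 0) (hm₂ : m₂ ≠ 0) (h : b₁ * m₁ ^ 2 = b₂ * m₂ ^ 2) : b₁ = b₂ ∧ m₁ = m₂ := by
  have key : ∀ p, b₁.factorization p = b₂.factorization p ∧
      m₁.factorization p = m₂.factorization p := fun p => by
    have hp := congrArg (fun n => n.factorization p) h
    simp only [Nat.factorization_mul h₁.ne_zero (pow_ne_zero 2 hm₁),
      Nat.factorization_mul h₂.ne_zero (pow_ne_zero 2 hm₂), Nat.factorization_pow,
      Finsupp.add_apply, Finsupp.smul_apply, smul_eq_mul] at hp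
    have := h₁.natFactorization_le_one p
    have := h₂.natFactorization_le_one p
    omega
  exact ⟨Nat.factorization_inj h₁.ne_zero h₂.ne_zero (Finsupp.ext fun p => (key p).1),
    Nat.factorization_inj hm₁ hm₂ (Finsupp.ext fun p => (key p).2)⟩

theorem summable_squarefree_rpow_inv {s : ℝ} (hs : 1 < s) :
    Summable fun b : ℕ => if Squarefree b then ((b : ℝ) ^ s)⁻¹ else 0 :=
  (Real.summable_nat_rpow_inv.2 hs).of_nonneg_of_le (fun b => by split_ifs <;> positivity)
    fun b => by split_ifs; exacts [le_rfl, by positivity]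

theorem tsum_squarefree_rpow_inv_mul_le {s : ℝ} (hs : 1 < s) :
    (∑' b : ℕ, if Squarefree b then ((b : ℝ) ^ s)⁻¹ else 0) * ∑' m : ℕ, ((m : ℝ) ^ (2 * s))⁻¹ ≤
      ∑' n : ℕ, ((n : ℝ) ^ s)⁻¹ := by
  set f : ℕ → ℝ := fun b => if Squarefree b then ((b : ℝ) ^ s)⁻¹ else 0
  set g : ℕ → ℝ := fun m => ((m : ℝ) ^ (2 * s))⁻¹
  have hf0 : ∀ b, 0 ≤ f b := fun b => by simp only [f]; split_ifs <;> positivity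
  have hfg : Summable fun p : ℕ × ℕ => f p.1 * g p.2 :=
    (summable_squarefree_rpow_inv hs).mul_of_nonneg (Real.summable_nat_rpow_inv.2 (by linarith))
      hf0 fun m => by positivity
  rw [(summable_squarefree_rpow_inv hs).tsum_mul_tsum
    (Real.summable_nat_rpow_inv.2 (by linarith)) hfg]
  set T : Set (ℕ × ℕ) := {p | Squarefree p.1 ∧ p.2 ≠ 0}
  have hsupp : Function.support (fun p : ℕ × ℕ => f p.1 * g p.2) ⊆ T := fun p hp => by
    refine ⟨by_contra fun h => hp (by simp [f, h]), fun h0 => hp ?_⟩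
    simp [g, h0, Real.zero_rpow (by linarith : 2 * s ≠ 0)]
  rw [← tsum_subtype_eq_of_support_subset hsupp]
  refine (hfg.subtype T).tsum_le_tsum_of_inj (fun p => p.1.1 * p.1.2 ^ 2) (fun p q hpq => ?_)
    (fun _ _ => by positivity) (fun p => le_of_eq ?_) (Real.summable_nat_rpow_inv.2 hs)
  · obtain ⟨h1, h2⟩ := Nat.eq_of_squarefree_mul_sq_eq p.2.1 q.2.1 p.2.2 q.2.2 hpq
    exact Subtype.ext (Prod.ext h1 h2)
  · simp only [f, g, if_pos p.2.1]
    push_cast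
    rw [Real.mul_rpow (by positivity) (by positivity), mul_inv, ← Real.rpow_natCast,
      ← Real.rpow_mul (Nat.cast_nonneg _)]
    norm_num

theorem riemannZeta_ofReal_eq_tsum {s : ℝ} (hs : 1 < s) :
    riemannZeta s = ((∑' n : ℕ, ((n : ℝ) ^ s)⁻¹ : ℝ) : ℂ) := by
  rw [zeta_eq_tsum_one_div_nat_cpow (by simpa using hs), Complex.ofReal_tsum]
  congr 1
  ext n
  rw [one_div, Complex.ofReal_inv, Complex.ofReal_cpow (Nat.cast_nonneg n), Complex.ofReal_natCast]

theorem tsum_squarefree_rpow_three_halves_inv_le {lam : ℝ}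
    (hlam : (lam : ℂ) = riemannZeta (3 / 2) / (2 * riemannZeta 3)) :
    ∑' b : ℕ, (if Squarefree b then ((b : ℝ) ^ (3 / 2 : ℝ))⁻¹ else 0) ≤ 2 * lam := by
  set A := ∑' n : ℕ, ((n : ℝ) ^ (3 / 2 : ℝ))⁻¹
  set B := ∑' m : ℕ, ((m : ℝ) ^ (2 * (3 / 2) : ℝ))⁻¹
  have hB : 0 < B := (Real.summable_nat_rpow_inv.2 (by norm_num)).tsum_pos
    (fun _ => by positivity) 1 (by norm_num)
  have hzeta3 : riemannZeta 3 = B := by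
    rw [← riemannZeta_ofReal_eq_tsum (by norm_num)]
    norm_num
  have hzeta32 : riemannZeta (3 / 2) = A := by
    rw [← riemannZeta_ofReal_eq_tsum (by norm_num)]
    norm_num
  have hlam' : lam = A / (2 * B) := by
    rw [hzeta3, hzeta32] at hlam
    exact_mod_cast hlam
  rw [hlam', show 2 * (A / (2 * B)) = A / B by field_simp, le_div_iff₀ hB]
  exact tsum_squarefree_rpow_inv_mul_le (by norm_num)

/-- With `λ = ζ(3/2)/(2ζ(3))`, for `x > y > 8` the number of pnds `n ≤ x` whose
square-full part is at least `y` is at most `λ x y^(-1/2) + 2 x y^(-2/3)`. -/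
theorem pnd_large_squarefull_count (lam x y : ℝ)
    (hlam : (lam : ℂ) = riemannZeta (3 / 2) / (2 * riemannZeta 3))
    (hy : 8 < y) (hxy : y < x) :
    ({n : ℕ | Pnd n ∧ (n : ℝ) ≤ x ∧ y ≤ (sqfullPart n : ℝ)}.ncard : ℝ) ≤
      lam * x * y ^ (-(1 / 2 : ℝ)) + 2 * x * y ^ (-(2 / 3 : ℝ)) := by
  have hy0 : 0 < y := by linarith
  have hx0 : 0 ≤ x := by linarith
  set g : ℕ → ℝ := fun b => if Squarefree b then ((b : ℝ) ^ (3 / 2 : ℝ))⁻¹ else 0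
  set h : ℕ → ℝ := fun b => if y ≤ (b : ℝ) ^ 3 then ((b : ℝ) ^ 3)⁻¹ else y⁻¹
  calc _ ≤ _ := ncard_pnd_le_sum_cube_mul_sq hx0
    _ ≤ ∑ b ∈ Icc 1 ⌊x⌋₊, (x / (2 * √y) * g b + x * h b) := by
        rw [sum_filter]
        exact sum_le_sum fun b hb =>
          ite_squarefree_sum_div_cube_mul_sq_le hx0 hy0 (mem_Icc.1 hb).1 _
    _ = x / (2 * √y) * ∑ b ∈ Icc 1 ⌊x⌋₊, g b + x * ∑ b ∈ Icc 1 ⌊x⌋₊, h b := by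
        rw [sum_add_distrib, mul_sum, mul_sum]
    _ ≤ x / (2 * √y) * (2 * lam) + x * (2 * y ^ (-(2 / 3 : ℝ))) := by
        gcongr
        · refine ((summable_squarefree_rpow_inv (by norm_num)).sum_le_tsum _ fun b _ => ?_).trans
            (tsum_squarefree_rpow_three_halves_inv_le hlam)
          split_ifs <;> positivity
        · exact sum_ite_inv_cube_le hy _
    _ = _ := by
        rw [Real.rpow_neg hy0.le (1 / 2), ← Real.sqrt_eq_rpow]
        ring
end

section
/- If n is a primitive nondeficient number whose largest prime factor P(n) satisfies P(n)² ∤ n, then 2 ≤ σ(n)/n < 2 + 2/P(n). -/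
open ArithmeticFunction
open scoped ArithmeticFunction.sigma

/-- The largest prime factor of `n`, with the convention `P 1 = 1`. -/
def P (n : ℕ) : ℕ := max 1 (n.primeFactors.sup _root_.id)

/-! Write `n = p m` with `p = P(n)`. Since `p ∤ m`, multiplicativity gives
`σ(n)/n = (1 + 1/p) · σ(m)/m`, and `m` is a proper divisor of the pnd `n`, hence deficient:
`σ(m)/m < 2`. -/

theorem P_mem_primeFactors {n : ℕ} (hn : 1 < n) : P n ∈ n.primeFactors := by
  obtain ⟨p, hp, hsup⟩ :=
    Finset.exists_mem_eq_sup _ (Nat.nonempty_primeFactors.mpr hn) _root_.id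
  rw [P, hsup, id, max_eq_right (Nat.prime_of_mem_primeFactors hp).one_le]
  exact hp

theorem sigma_one_prime_mul {p m : ℕ} (hp : p.Prime) (hpm : ¬ p ∣ m) :
    σ 1 (p * m) = (p + 1) * σ 1 m := by
  rw [isMultiplicative_sigma.map_mul_of_coprime (hp.coprime_iff_not_dvd.mpr hpm),
    sigma_one_apply, hp.divisors, Finset.sum_pair hp.one_lt.ne, add_comm]

theorem pos_of_sigma_one_lt {m : ℕ} (hm : σ 1 m < 2 * m) : 0 < m :=
  Nat.pos_of_ne_zero (by rintro rfl; simp at hm)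

theorem sigma_one_prime_mul_div_lt {p m : ℕ} (hp : p.Prime) (hpm : ¬ p ∣ m)
    (hm : σ 1 m < 2 * m) : (σ 1 (p * m) : ℝ) / (p * m : ℕ) < 2 + 2 / p := by
  have hpR : (0 : ℝ) < p := by exact_mod_cast hp.pos
  have hmR : (0 : ℝ) < m := by exact_mod_cast pos_of_sigma_one_lt hm
  have hmR' : (σ 1 m : ℝ) < 2 * m := by exact_mod_cast hm
  rw [sigma_one_prime_mul hp hpm]
  push_cast
  rw [div_lt_iff₀ (by positivity)]
  calc ((p : ℝ) + 1) * σ 1 m < (p + 1) * (2 * m) := by gcongr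
    _ = (2 + 2 / p) * (p * m) := by field_simp

namespace Pnd

theorem one_lt {n : ℕ} (hn : Pnd n) : 1 < n := by
  obtain ⟨hn0, hge, -⟩ := hn
  by_contra h
  obtain rfl : n = 1 := by omega
  simp at hge

theorem two_le_sigma_one_div {n : ℕ} (hn : Pnd n) : 2 ≤ (σ 1 n : ℝ) / n := by
  rw [le_div_iff₀ (by exact_mod_cast hn.1)]
  exact_mod_cast hn.2.1

end Pnd

/-- If `n` is a pnd with `P(n)² ∤ n`, then `2 ≤ σ(n)/n < 2 + 2/P(n)`. -/
theorem pnd_h_bounds (n : ℕ) (hn : Pnd n) (hP : ¬ (P n) ^ 2 ∣ n) :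
    2 ≤ (σ 1 n : ℝ) / n ∧ (σ 1 n : ℝ) / n < 2 + 2 / (P n : ℝ) := by
  refine ⟨hn.two_le_sigma_one_div, ?_⟩
  have hPmem := P_mem_primeFactors hn.one_lt
  set p := P n
  have hp : p.Prime := Nat.prime_of_mem_primeFactors hPmem
  obtain ⟨m, hnm⟩ := Nat.dvd_of_mem_primeFactors hPmem
  have hpm : ¬ p ∣ m := fun h => hP (hnm ▸ pow_two p ▸ mul_dvd_mul_left p h)
  have hm_lt : m < n := hnm ▸ lt_mul_left (Nat.pos_of_mul_pos_left (hnm ▸ hn.1)) hp.one_lt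
  rw [hnm]
  exact sigma_one_prime_mul_div_lt hp hpm (hn.2.2 m (hnm ▸ dvd_mul_left m p) hm_lt)
end

section
/- If d₁ and d₂ are distinct squarefree positive integers, then σ(d₁)/d₁ ≠ σ(d₂)/d₂. -/
/-!
Cancelling the common part `g = gcd(d₁, d₂)` (coprime to both cofactors, as the `dᵢ` are squarefree)
reduces to coprime squarefree `a`, `b` with `σ(a) b = σ(b) a`, hence `a ∣ σ(a)` and `b ∣ σ(b)`.
For squarefree `n > 1` we have `σ(n) = ∏_{p ∣ n} (p + 1)`, so the largest prime factor `p` of `n`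
divides `q + 1` for a smaller prime factor `q`; this forces `q = 2`, `p = 3` and `n = 6`.
Finally `σ(1)/1 = 1 ≠ 2 = σ(6)/6`.
-/

open ArithmeticFunction
open scoped ArithmeticFunction.sigma

theorem sigma_one_eq_prod_primeFactors_of_squarefree {n : ℕ} (hn : Squarefree n) :
    σ 1 n = ∏ p ∈ n.primeFactors, (p + 1) := by
  rw [← isMultiplicative_sigma.prod_primeFactors hn]
  refine Finset.prod_congr rfl fun p hp => ?_
  simpa [Finset.sum_range_succ, add_comm] using
    sigma_one_apply_prime_pow (i := 1) (Nat.prime_of_mem_primeFactors hp)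

theorem Nat.Prime.eq_two_and_eq_three_of_dvd_succ {p q : ℕ} (hp : p.Prime) (hq : q.Prime)
    (hqp : q < p) (hdvd : p ∣ q + 1) : q = 2 ∧ p = 3 := by
  have hsucc : p = q + 1 := le_antisymm (Nat.le_of_dvd q.succ_pos hdvd) hqp
  rcases hq.eq_two_or_odd' with rfl | hodd
  · exact ⟨rfl, hsucc⟩
  · have : Even p := hsucc ▸ hodd.add_one
    exact absurd (hp.even_iff.mp this) (by have := hq.two_le; omega)

theorem Squarefree.eq_one_or_eq_six_of_dvd_sigma_one {n : ℕ} (hn : Squarefree n)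
    (hdvd : n ∣ σ 1 n) : n = 1 ∨ n = 6 := by
  rcases eq_or_ne n 1 with rfl | hn1
  · exact Or.inl rfl
  right
  have hfac : n.primeFactors.Nonempty := Nat.nonempty_primeFactors.mpr
    (by have := hn.ne_zero; omega)
  set p := n.primeFactors.max' hfac
  have hpmem : p ∈ n.primeFactors := n.primeFactors.max'_mem hfac
  have hp : p.Prime := Nat.prime_of_mem_primeFactors hpmem
  have hpσ : p ∣ ∏ q ∈ n.primeFactors, (q + 1) :=
    sigma_one_eq_prod_primeFactors_of_squarefree hn ▸
      (Nat.dvd_of_mem_primeFactors hpmem).trans hdvd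
  obtain ⟨q, hqmem, hpq⟩ := hp.prime.exists_mem_finset_dvd hpσ
  have hqp : q < p := by
    refine lt_of_le_of_ne (n.primeFactors.le_max' q hqmem) ?_
    rintro rfl
    exact hp.one_lt.ne' (Nat.dvd_one.mp ((Nat.dvd_add_right dvd_rfl).mp hpq))
  obtain ⟨rfl, hp3⟩ := hp.eq_two_and_eq_three_of_dvd_succ
    (Nat.prime_of_mem_primeFactors hqmem) hqp hpq
  have hfactors : n.primeFactors = {2, 3} := by
    refine Finset.Subset.antisymm (fun r hr => ?_) ?_
    · have hr3 : r ≤ 3 := hp3 ▸ n.primeFactors.le_max' r hr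
      have := (Nat.prime_of_mem_primeFactors hr).two_le
      interval_cases r <;> simp
    · exact Finset.insert_subset hqmem (Finset.singleton_subset_iff.mpr (hp3 ▸ hpmem))
  rw [← Nat.prod_primeFactors_of_squarefree hn, hfactors]
  rfl

theorem eq_of_coprime_of_sigma_one_mul_eq {a b : ℕ} (ha : Squarefree a) (hb : Squarefree b)
    (hab : a.Coprime b) (h : σ 1 a * b = σ 1 b * a) : a = b := by
  have ha6 := ha.eq_one_or_eq_six_of_dvd_sigma_one <|
    hab.dvd_of_dvd_mul_right (h ▸ dvd_mul_left a _)
  have hb6 := hb.eq_one_or_eq_six_of_dvd_sigma_one <|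
    hab.symm.dvd_of_dvd_mul_right (h.symm ▸ dvd_mul_left b _)
  rcases ha6 with rfl | rfl <;> rcases hb6 with rfl | rfl <;> revert h <;> decide

theorem sigma_one_mul_eq_of_squarefree_mul {a b g : ℕ} (ha : Squarefree (a * g))
    (hb : Squarefree (b * g)) (h : σ 1 (a * g) * (b * g) = σ 1 (b * g) * (a * g)) :
    σ 1 a * b = σ 1 b * a := by
  rw [isMultiplicative_sigma.map_mul_of_coprime (Nat.coprime_of_squarefree_mul ha),
    isMultiplicative_sigma.map_mul_of_coprime (Nat.coprime_of_squarefree_mul hb)] at h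
  have hg : 0 < σ 1 g * g := by
    have := Nat.pos_of_ne_zero (Nat.squarefree_mul_iff.mp ha).2.2.ne_zero
    positivity
  exact Nat.eq_of_mul_eq_mul_left hg (by linarith)

theorem squarefree_sigma_ratio_injective_general (d₁ d₂ : ℕ)
    (hsf₁ : Squarefree d₁) (hsf₂ : Squarefree d₂) (hne : d₁ ≠ d₂) :
    (σ 1 d₁ : ℚ) / d₁ ≠ (σ 1 d₂ : ℚ) / d₂ := by
  intro h
  have hcross : σ 1 d₁ * d₂ = σ 1 d₂ * d₁ := by
    rw [div_eq_div_iff (by exact_mod_cast hsf₁.ne_zero) (by exact_mod_cast hsf₂.ne_zero)] at h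
    exact_mod_cast h
  obtain ⟨g, a, b, -, hab, rfl, rfl⟩ :=
    Nat.exists_coprime' (Nat.gcd_pos_of_pos_left d₂ (Nat.pos_of_ne_zero hsf₁.ne_zero))
  have hab_eq : a = b := eq_of_coprime_of_sigma_one_mul_eq (Nat.squarefree_mul_iff.mp hsf₁).2.1
    (Nat.squarefree_mul_iff.mp hsf₂).2.1 hab (sigma_one_mul_eq_of_squarefree_mul hsf₁ hsf₂ hcross)
  exact hne (hab_eq ▸ rfl)

/-- If `d₁` and `d₂` are distinct squarefree positive integers, then
`σ(d₁)/d₁ ≠ σ(d₂)/d₂`. -/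
theorem squarefree_sigma_ratio_injective (d₁ d₂ : ℕ) (h₁ : 0 < d₁) (h₂ : 0 < d₂)
    (hsf₁ : Squarefree d₁) (hsf₂ : Squarefree d₂) (hne : d₁ ≠ d₂) :
    (σ 1 d₁ : ℚ) / d₁ ≠ (σ 1 d₂ : ℚ) / d₂ :=
  squarefree_sigma_ratio_injective_general d₁ d₂ hsf₁ hsf₂ hne
end

section
/- Let n be a primitive nondeficient number and let m > 1 be an integer all of whose prime factors exceed √(2n). Then m·n is abundant (σ(mn) > 2mn), and every primitive nondeficient divisor of m·n is ≥ n; that is, n is the smallest primitive nondeficient divisor of m·n. -/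
open ArithmeticFunction
open scoped ArithmeticFunction.sigma

/-! Multiplying a pnd `n` by `m > 1` only adds divisors, so `m * n` is abundant. A pnd `d < n`
dividing `m * n` cannot divide `n`, so it shares a prime `p` with `m`. But a prime power `P = p ^ a`
exactly dividing a pnd `d` satisfies `p * P < 2 * d`: from `σ(d) = σ(P) σ(d / P) ≥ 2d`,
`(p - 1) σ(P) < p P` and the deficiency `σ(d / P) ≤ 2 d / P - 1`. Hence `p ^ 2 < 2 * d < 2 * n`,
against `p > √(2n)`. -/

lemma mul_sigma_one_lt_sigma_one_mul {m n : ℕ} (hm : 1 < m) (hn : n ≠ 0) :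
    m * σ 1 n < σ 1 (m * n) := by
  have hmn : m * n ≠ 0 := by positivity
  have hsub : insert 1 (n.divisors.image (m * ·)) ⊆ (m * n).divisors := by
    simp only [Finset.insert_subset_iff, Nat.one_mem_divisors, Finset.image_subset_iff]
    exact ⟨hmn, fun d hd => Nat.mem_divisors.mpr
      ⟨mul_dvd_mul_left m (Nat.dvd_of_mem_divisors hd), hmn⟩⟩
  have h1 : 1 ∉ n.divisors.image (m * ·) := by
    simp only [Finset.mem_image, not_exists, not_and]
    exact fun d _ h => hm.ne' (Nat.eq_one_of_mul_eq_one_right h)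
  calc m * σ 1 n < 1 + ∑ d ∈ n.divisors.image (m * ·), d := by
        rw [Finset.sum_image fun x _ y _ h => Nat.eq_of_mul_eq_mul_left (by omega) h,
          sigma_one_apply, Finset.mul_sum]
        omega
    _ = ∑ d ∈ insert 1 (n.divisors.image (m * ·)), d := (Finset.sum_insert (f := id) h1).symm
    _ ≤ σ 1 (m * n) := sigma_one_apply (m * n) ▸ Finset.sum_le_sum_of_subset hsub

lemma sigma_one_prime_pow_mul_sub_one {p : ℕ} (hp : p.Prime) (k : ℕ) :
    (σ 1 (p ^ k) : ℤ) * (p - 1) = p ^ (k + 1) - 1 := by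
  rw [sigma_one_apply_prime_pow hp]
  push_cast
  exact geom_sum_mul _ _

namespace Pnd

lemma eq_of_dvd_s11 {d n : ℕ} (hd : Pnd d) (hn : Pnd n) (hdn : d ∣ n) : d = n := by
  by_contra hne
  have := hn.2.2 d hdn (lt_of_le_of_ne (Nat.le_of_dvd hn.1 hdn) hne)
  exact this.not_ge hd.2.1

lemma prime_mul_ordProj_lt {d p : ℕ} (hd : Pnd d) (hp : p.Prime) (hpd : p ∣ d) :
    p * p ^ d.factorization p < 2 * d := by
  obtain ⟨hd0, hnd, hdef⟩ := hd
  set P := p ^ d.factorization p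
  set e := d / P
  have hPe : P * e = d := Nat.ordProj_mul_ordCompl_eq_self d p
  have hP : 2 ≤ P := hp.two_le.trans
    (le_self_pow₀ hp.one_le (hp.factorization_pos_of_dvd hd0.ne' hpd).ne')
  have he0 : 0 < e := Nat.pos_of_ne_zero (by rintro h; simp [h] at hPe; omega)
  have hσe : σ 1 e + 1 ≤ 2 * e :=
    hdef e (Dvd.intro_left P hPe) (by nlinarith)
  have hσd : 2 * d ≤ σ 1 P * σ 1 e := by
    rwa [← isMultiplicative_sigma.map_mul_of_coprime
      ((Nat.coprime_ordCompl hp hd0.ne').pow_left _), hPe]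
  have hgeom : (σ 1 P : ℤ) * (p - 1) = p * P - 1 := by
    rw [sigma_one_prime_pow_mul_sub_one hp]
    push_cast [P]
    ring
  zify at hσe hσd hP hPe ⊢
  have hp1 : (1 : ℤ) ≤ p := by exact_mod_cast hp.one_le
  have key : (2 * d : ℤ) * (p - 1) ≤ (p * P - 1) * (2 * e - 1) :=
    calc (2 * d : ℤ) * (p - 1) ≤ σ 1 P * σ 1 e * (p - 1) :=
          mul_le_mul_of_nonneg_right hσd (by omega)
      _ = (p * P - 1) * σ 1 e := by rw [← hgeom]; ring
      _ ≤ (p * P - 1) * (2 * e - 1) :=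
          mul_le_mul_of_nonneg_left (by omega) (by nlinarith)
  rw [← hPe] at key ⊢
  linarith

lemma sq_lt_of_prime_dvd {d p : ℕ} (hd : Pnd d) (hp : p.Prime) (hpd : p ∣ d) :
    p ^ 2 < 2 * d :=
  calc p ^ 2 = p * p ^ 1 := by ring
    _ ≤ p * p ^ d.factorization p := Nat.mul_le_mul_left p
      (Nat.pow_le_pow_right hp.pos (hp.factorization_pos_of_dvd hd.1.ne' hpd))
    _ < 2 * d := hd.prime_mul_ordProj_lt hp hpd

end Pnd

/-- If `n` is a pnd and `m > 1` has all its prime factors exceeding `√(2n)`,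
then `m * n` is abundant and `n` is the smallest pnd divisor of `m * n`. -/
theorem pnd_smallest_divisor_of_abundant (n m : ℕ) (hn : Pnd n) (hm : 1 < m)
    (hp : ∀ p : ℕ, p.Prime → p ∣ m → Real.sqrt (2 * n) < (p : ℝ)) :
    2 * (m * n) < σ 1 (m * n) ∧ ∀ d : ℕ, d ∣ m * n → Pnd d → n ≤ d := by
  have hp2 : ∀ p : ℕ, p.Prime → p ∣ m → 2 * n < p ^ 2 := fun p hpp hpm => by
    have : ((2 * n : ℕ) : ℝ) < (p : ℝ) ^ 2 :=
      (Real.sqrt_lt' (by exact_mod_cast hpp.pos)).mp (by exact_mod_cast hp p hpp hpm)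
    exact_mod_cast this
  refine ⟨?_, fun d hdvd hd => ?_⟩
  · calc 2 * (m * n) = m * (2 * n) := by ring
      _ ≤ m * σ 1 n := Nat.mul_le_mul_left m hn.2.1
      _ < σ 1 (m * n) := mul_sigma_one_lt_sigma_one_mul hm hn.1.ne'
  · by_contra! hlt
    by_cases hco : d.Coprime m
    · exact hlt.ne (hd.eq_of_dvd_s11 hn (hco.dvd_of_dvd_mul_left hdvd))
    · obtain ⟨p, hpp, hpd, hpm⟩ := Nat.Prime.not_coprime_iff_dvd.mp hco
      have := hd.sq_lt_of_prime_dvd hpp hpd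
      have := hp2 p hpp hpm
      omega
end

section
/- For real numbers x ≥ 1, y ≥ 2 and s ∈ [0, 1), the sum of 1/n over positive integers n > x with P(n) ≤ y satisfies ∑ 1/n ≤ x^(−s) · ∏_{p ≤ y, p prime} (1 − p^(s−1))^(−1). -/
open scoped Classical

/-!
Rankin's trick: for `n > x` and `s ≥ 0` we have `1/n ≤ x^(-s) n^(s-1)`, so the sum is dominated
termwise by `x^(-s)` times the sum of `n^(s-1)` over all `y`-smooth `n`. Since `s - 1 < 0`,
that sum is the finite Euler product `∏_{p ≤ y} (1 - p^(s-1))⁻¹`.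
-/

theorem le_P_of_mem_primeFactors {n p : ℕ} (hp : p ∈ n.primeFactors) : p ≤ P n :=
  (Finset.le_sup (f := _root_.id) hp).trans (le_max_right _ _)

theorem mem_smoothNumbers_succ_of_P_le {n k : ℕ} (hn : n ≠ 0) (h : P n ≤ k) :
    n ∈ (k + 1).smoothNumbers :=
  Nat.mem_smoothNumbers'.mpr fun _ hp hdvd =>
    Nat.lt_succ_of_le <|
      (le_P_of_mem_primeFactors (Nat.mem_primeFactors.mpr ⟨hp, hdvd, hn⟩)).trans h

noncomputable def natRpowHom (t : ℝ) : ℕ →* ℝ where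
  toFun n := (n : ℝ) ^ t
  map_one' := by simp
  map_mul' m n := by
    push_cast
    exact Real.mul_rpow (Nat.cast_nonneg m) (Nat.cast_nonneg n)

theorem hasSum_indicator_smoothNumbers_rpow {t : ℝ} (ht : t < 0) (N : ℕ) :
    HasSum (N.smoothNumbers.indicator fun n : ℕ => (n : ℝ) ^ t)
      (∏ p ∈ N.primesBelow, (1 - (p : ℝ) ^ t)⁻¹) := by
  have hlt : ∀ {p : ℕ}, p.Prime → ‖natRpowHom t p‖ < 1 := fun {p} hp => by
    have hp1 : (1 : ℝ) < p := by exact_mod_cast hp.one_lt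
    change ‖(p : ℝ) ^ t‖ < 1
    rw [Real.norm_of_nonneg (Real.rpow_nonneg (Nat.cast_nonneg _) _)]
    exact Real.rpow_lt_one_of_one_lt_of_neg hp1 ht
  exact hasSum_subtype_iff_indicator.mp
    (EulerProduct.summable_and_hasSum_smoothNumbers_prod_primesBelow_geometric hlt N).2

theorem one_div_le_rpow_neg_mul_rpow_sub_one {x n s : ℝ} (hx : 0 < x) (hxn : x ≤ n)
    (hs : 0 ≤ s) : 1 / n ≤ x ^ (-s) * n ^ (s - 1) := by
  have hn : 0 < n := hx.trans_le hxn
  have hratio : 1 ≤ (n / x) ^ s := Real.one_le_rpow ((one_le_div hx).mpr hxn) hs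
  calc 1 / n = 1 * (1 / n) := (one_mul _).symm
    _ ≤ (n / x) ^ s * (1 / n) := by gcongr
    _ = x ^ (-s) * n ^ (s - 1) := by
      rw [Real.div_rpow hn.le hx.le, Real.rpow_neg hx.le, Real.rpow_sub_one hn.ne']
      ring

theorem rankin_term_le {x y s : ℝ} (hx : 0 < x) (hs : 0 ≤ s) (n : ℕ) :
    (if 0 < n ∧ x < (n : ℝ) ∧ (P n : ℝ) ≤ y then (1 : ℝ) / n else 0) ≤
      x ^ (-s) * (⌊y⌋₊ + 1).smoothNumbers.indicator (fun n : ℕ => (n : ℝ) ^ (s - 1)) n := by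
  split_ifs with h
  · obtain ⟨hn, hxn, hPy⟩ := h
    rw [Set.indicator_of_mem (mem_smoothNumbers_succ_of_P_le hn.ne' (Nat.le_floor hPy))]
    exact one_div_le_rpow_neg_mul_rpow_sub_one hx hxn.le hs
  · exact mul_nonneg (Real.rpow_nonneg hx.le _)
      (Set.indicator_nonneg (fun _ _ => Real.rpow_nonneg (Nat.cast_nonneg _) _) _)

theorem smooth_reciprocal_sum_rankin_general (x y s : ℝ) (hx : 1 ≤ x)
    (hs0 : 0 ≤ s) (hs1 : s < 1) :
    Summable (fun n : ℕ =>
      if 0 < n ∧ x < (n : ℝ) ∧ (P n : ℝ) ≤ y then (1 : ℝ) / n else 0) ∧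
    (∑' n : ℕ, if 0 < n ∧ x < (n : ℝ) ∧ (P n : ℝ) ≤ y then (1 : ℝ) / n else 0) ≤
      x ^ (-s) *
        ∏ p ∈ (Finset.range (⌊y⌋₊ + 1)).filter Nat.Prime,
          (1 - (p : ℝ) ^ (s - 1))⁻¹ := by
  have hx0 : 0 < x := one_pos.trans_le hx
  have hdom := (hasSum_indicator_smoothNumbers_rpow (t := s - 1) (by linarith)
    (⌊y⌋₊ + 1)).mul_left (x ^ (-s))
  have hle := rankin_term_le (y := y) hx0 hs0
  have hnonneg : ∀ n : ℕ,
      0 ≤ (if 0 < n ∧ x < (n : ℝ) ∧ (P n : ℝ) ≤ y then (1 : ℝ) / n else 0) := fun n => by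
    split_ifs <;> positivity
  have hsum := Summable.of_nonneg_of_le hnonneg hle hdom.summable
  exact ⟨hsum, (hsum.tsum_le_tsum hle hdom.summable).trans_eq hdom.tsum_eq⟩

/-- Rankin's trick: for `x ≥ 1`, `y ≥ 2` and `s ∈ [0, 1)`, the sum of `1/n`
over the `y`-smooth integers `n > x` is at most
`x^(−s) ∏_{p ≤ y} (1 − p^(s−1))⁻¹`. -/
theorem smooth_reciprocal_sum_rankin (x y s : ℝ) (hx : 1 ≤ x) (hy : 2 ≤ y)
    (hs0 : 0 ≤ s) (hs1 : s < 1) :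
    Summable (fun n : ℕ =>
      if 0 < n ∧ x < (n : ℝ) ∧ (P n : ℝ) ≤ y then (1 : ℝ) / n else 0) ∧
    (∑' n : ℕ, if 0 < n ∧ x < (n : ℝ) ∧ (P n : ℝ) ≤ y then (1 : ℝ) / n else 0) ≤
      x ^ (-s) *
        ∏ p ∈ (Finset.range (⌊y⌋₊ + 1)).filter Nat.Prime,
          (1 - (p : ℝ) ^ (s - 1))⁻¹ :=
  smooth_reciprocal_sum_rankin_general x y s hx hs0 hs1
end

section
/- Let ε = 2.3×10⁻⁸ and Li(x) = ∫₂ˣ dt/log t. Assume that the Chebyshev function ϑ(t) = ∑_{p ≤ t, p prime} log p satisfies ϑ(t) < (1+ε)·t for all t > 0. Then for every real y ≥ 2 and every s ∈ (0, 0.041], ∑_{p ≤ y, p prime} p^(s−1) ≤ (1+ε)·( Li(y^s) − Li(2^s) + 2^s/log 2 ). -/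
/-- The first Chebyshev function `ϑ(t) = ∑_{p ≤ t} log p`, the sum ranging over
primes `p ≤ t`. -/
noncomputable def theta (t : ℝ) : ℝ :=
  ∑ p ∈ (Finset.range (⌊t⌋₊ + 1)).filter Nat.Prime, Real.log p

/-- The logarithmic integral `Li(x) = ∫₂ˣ dt / log t`. -/
noncomputable def Li (x : ℝ) : ℝ := ∫ t in (2 : ℝ)..x, 1 / Real.log t

/-!
Write `p ^ (s - 1) = log p · f p` with `f t = t ^ (s - 1) / log t`, which is decreasing on
`(1, ∞)` when `s ≤ 1`. Abel summation against `ϑ` gives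
`∑_{p ≤ y} log p · f p = f y · ϑ y - ∫₂^y f' t · ϑ t dt`; as `f y ≥ 0` and `-f' ≥ 0`, the bound
`ϑ t ≤ c t` turns this into `c (y f y - ∫₂^y t f' t dt) = c (2 f 2 + ∫₂^y f)` after an integration
by parts. Finally `2 f 2 = 2 ^ s / log 2`, and the substitution `u = t ^ s` gives
`∫₂^y f = Li (y ^ s) - Li (2 ^ s)`.
-/

open Real MeasureTheory

noncomputable def primeLog (n : ℕ) : ℝ := if n.Prime then log n else 0

lemma theta_eq_sum_primeLog (t : ℝ) : theta t = ∑ k ∈ Finset.Icc 0 ⌊t⌋₊, primeLog k := by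
  rw [theta, Finset.sum_filter, Nat.range_succ_eq_Icc_zero]
  rfl

lemma intervalIntegrable_mul_theta {g : ℝ → ℝ} {y : ℝ} (hy : 2 ≤ y)
    (hg : IntegrableOn g (Set.Icc 2 y)) :
    IntervalIntegrable (fun t ↦ g t * theta t) volume 2 y := by
  simp_rw [theta_eq_sum_primeLog]
  exact (intervalIntegrable_iff_integrableOn_Icc_of_le hy).mpr
    (integrableOn_mul_sum_Icc primeLog zero_le_two hg)

theorem sum_log_mul_eq_sub_integral_mul_theta {f f' : ℝ → ℝ} {y : ℝ} (hy : 2 ≤ y)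
    (hf : ∀ t ∈ Set.Icc 2 y, HasDerivAt f (f' t) t) (hf' : IntegrableOn f' (Set.Icc 2 y)) :
    ∑ p ∈ (Finset.range (⌊y⌋₊ + 1)).filter Nat.Prime, log p * f p =
      f y * theta y - ∫ t in 2..y, f' t * theta t := by
  have hderiv : Set.EqOn (deriv f) f' (Set.Icc 2 y) := fun t ht ↦ (hf t ht).deriv
  rw [Finset.sum_filter, Nat.range_succ_eq_Icc_zero, theta_eq_sum_primeLog,
    intervalIntegral.integral_of_le hy,
    setIntegral_congr_fun measurableSet_Ioc fun t ht ↦ by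
      rw [theta_eq_sum_primeLog, ← hderiv (Set.Ioc_subset_Icc_self ht)],
    ← sum_mul_eq_sub_integral_mul₁ primeLog (by simp [primeLog]) (by simp [primeLog]) y
      (fun t ht ↦ (hf t ht).differentiableAt) (hf'.congr_fun hderiv.symm measurableSet_Icc)]
  refine Finset.sum_congr rfl fun p _ ↦ ?_
  by_cases hp : p.Prime <;> simp [primeLog, hp, mul_comm]

theorem sum_log_mul_le_of_theta_le {c y : ℝ} {f f' : ℝ → ℝ} (hy : 2 ≤ y)
    (hθ : ∀ t ∈ Set.Icc 2 y, theta t ≤ c * t)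
    (hf : ∀ t ∈ Set.Icc 2 y, HasDerivAt f (f' t) t) (hf' : ContinuousOn f' (Set.Icc 2 y))
    (hf'_nonpos : ∀ t ∈ Set.Icc 2 y, f' t ≤ 0) (hfy : 0 ≤ f y) :
    ∑ p ∈ (Finset.range (⌊y⌋₊ + 1)).filter Nat.Prime, log p * f p ≤
      c * (2 * f 2 + ∫ t in 2..y, f t) := by
  have huIcc : Set.uIcc 2 y = Set.Icc 2 y := Set.uIcc_of_le hy
  have hf'_int : IntervalIntegrable f' volume 2 y := (huIcc ▸ hf').intervalIntegrable
  have hparts : ∫ t in 2..y, t * f' t = y * f y - 2 * f 2 - ∫ t in 2..y, f t := by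
    simpa using intervalIntegral.integral_mul_deriv_eq_deriv_mul
      (fun t _ ↦ hasDerivAt_id t) (fun t ht ↦ hf t (huIcc ▸ ht)) intervalIntegrable_const hf'_int
  calc ∑ p ∈ (Finset.range (⌊y⌋₊ + 1)).filter Nat.Prime, log p * f p
      = f y * theta y - ∫ t in 2..y, f' t * theta t :=
        sum_log_mul_eq_sub_integral_mul_theta hy hf hf'.integrableOn_Icc
    _ ≤ f y * (c * y) - ∫ t in 2..y, f' t * (c * t) :=
        sub_le_sub (mul_le_mul_of_nonneg_left (hθ y ⟨hy, le_rfl⟩) hfy)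
          (intervalIntegral.integral_mono_on hy (hf'_int.mul_continuousOn (by fun_prop))
            (intervalIntegrable_mul_theta hy hf'.integrableOn_Icc)
            fun t ht ↦ mul_le_mul_of_nonpos_left (hθ t ht) (hf'_nonpos t ht))
    _ = c * (y * f y - ∫ t in 2..y, t * f' t) := by
        simp only [show ∀ t, f' t * (c * t) = c * (t * f' t) from fun t ↦ by ring,
          intervalIntegral.integral_const_mul]
        ring
    _ = c * (2 * f 2 + ∫ t in 2..y, f t) := by
        rw [hparts]
        ring

lemma hasDerivAt_rpow_sub_one_div_log (s : ℝ) {t : ℝ} (ht : 1 < t) :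
    HasDerivAt (fun u ↦ u ^ (s - 1) / log u)
      (t ^ (s - 2) * ((s - 1) * log t - 1) / log t ^ 2) t := by
  have ht0 : 0 < t := one_pos.trans ht
  have hlog : log t ≠ 0 := (log_pos ht).ne'
  refine ((hasDerivAt_rpow_const (p := s - 1) (Or.inl ht0.ne')).div
    (hasDerivAt_log ht0.ne') hlog).congr_deriv ?_
  rw [show s - 2 = s - 1 - 1 by ring, rpow_sub_one ht0.ne' (s - 1)]
  field_simp

lemma continuousOn_rpow_mul_log_sub_one_div_log_sq (s : ℝ) :
    ContinuousOn (fun t ↦ t ^ (s - 2) * ((s - 1) * log t - 1) / log t ^ 2) (Set.Ioi 1) := by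
  intro t ht
  have ht0 : t ≠ 0 := (one_pos.trans ht).ne'
  have : t ≠ 0 ∨ 0 ≤ s - 2 := Or.inl ht0
  have : log t ^ 2 ≠ 0 := pow_ne_zero 2 (log_pos ht).ne'
  exact ContinuousAt.continuousWithinAt (by fun_prop (disch := assumption))

lemma rpow_mul_log_sub_one_div_log_sq_nonpos {s t : ℝ} (hs : s ≤ 1) (ht : 1 < t) :
    t ^ (s - 2) * ((s - 1) * log t - 1) / log t ^ 2 ≤ 0 :=
  div_nonpos_of_nonpos_of_nonneg (mul_nonpos_of_nonneg_of_nonpos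
    (rpow_nonneg (one_pos.trans ht).le _) (by nlinarith [log_pos ht])) (sq_nonneg _)

lemma intervalIntegrable_one_div_log {a b : ℝ} (ha : 1 < a) (hb : 1 < b) :
    IntervalIntegrable (fun u ↦ 1 / log u) volume a b := by
  refine ContinuousOn.intervalIntegrable fun u hu ↦ ContinuousAt.continuousWithinAt ?_
  rw [Set.mem_uIcc] at hu
  have : u ≠ 0 := by grind
  have : log u ≠ 0 := log_ne_zero.mpr (by grind)
  fun_prop (disch := assumption)

lemma Li_sub_Li {a b : ℝ} (ha : 1 < a) (hb : 1 < b) :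
    Li b - Li a = ∫ u in a..b, 1 / log u :=
  intervalIntegral.integral_interval_sub_left
    (intervalIntegrable_one_div_log one_lt_two hb) (intervalIntegrable_one_div_log one_lt_two ha)

theorem integral_rpow_sub_one_div_log {s a b : ℝ} (hs : 0 < s) (ha : 1 < a) (hb : 1 < b) :
    ∫ t in a..b, t ^ (s - 1) / log t = Li (b ^ s) - Li (a ^ s) := by
  have hmem : ∀ t ∈ Set.uIcc a b, 1 < t := fun t ht ↦ by
    rw [Set.mem_uIcc] at ht
    grind
  have hsubst : ∀ t ∈ Set.uIcc a b,
      t ^ (s - 1) / log t = ((fun u ↦ 1 / log u) ∘ (· ^ s)) t * (s * t ^ (s - 1)) := by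
    intro t ht
    have ht0 : 0 < t := one_pos.trans (hmem t ht)
    have hlog : log t ≠ 0 := (log_pos (hmem t ht)).ne'
    simp only [Function.comp, log_rpow ht0]
    field_simp
  rw [intervalIntegral.integral_congr hsubst,
    intervalIntegral.integral_comp_mul_deriv_of_deriv_nonneg
      (continuous_rpow_const hs.le).continuousOn
      (fun t ht ↦ hasDerivAt_rpow_const
        (Or.inl (one_pos.trans (hmem t (Set.Ioo_subset_Icc_self ht))).ne'))
      (fun t ht ↦ mul_nonneg hs.le
        (rpow_nonneg (one_pos.trans (hmem t (Set.Ioo_subset_Icc_self ht))).le _)),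
    Li_sub_Li (one_lt_rpow ha hs) (one_lt_rpow hb hs)]

/-- With `ε = 2.3·10⁻⁸`: if `ϑ(t) < (1+ε) t` for all `t > 0`, then for `y ≥ 2`
and `s ∈ (0, 0.041]`,
`∑_{p ≤ y} p^(s−1) ≤ (1+ε)(Li(y^s) − Li(2^s) + 2^s/log 2)`. -/
theorem prime_power_sum_le_li (htheta : ∀ t : ℝ, 0 < t → theta t < (1 + 2.3e-8) * t)
    (y s : ℝ) (hy : 2 ≤ y) (hs0 : 0 < s) (hs : s ≤ 0.041) :
    ∑ p ∈ (Finset.range (⌊y⌋₊ + 1)).filter Nat.Prime, (p : ℝ) ^ (s - 1) ≤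
      (1 + 2.3e-8) * (Li (y ^ s) - Li (2 ^ s) + 2 ^ s / Real.log 2) := by
  have hs1 : s ≤ 1 := hs.trans (by norm_num)
  have hone_lt : ∀ t ∈ Set.Icc (2 : ℝ) y, 1 < t := fun t ht ↦ one_lt_two.trans_le ht.1
  calc ∑ p ∈ (Finset.range (⌊y⌋₊ + 1)).filter Nat.Prime, (p : ℝ) ^ (s - 1)
      = ∑ p ∈ (Finset.range (⌊y⌋₊ + 1)).filter Nat.Prime, log p * (p ^ (s - 1) / log p) := by
        refine Finset.sum_congr rfl fun p hp ↦ ?_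
        have : log p ≠ 0 := (log_pos (by exact_mod_cast (Finset.mem_filter.mp hp).2.one_lt)).ne'
        field_simp
    _ ≤ (1 + 2.3e-8) * (2 * (2 ^ (s - 1) / log 2) + ∫ t in 2..y, t ^ (s - 1) / log t) :=
        sum_log_mul_le_of_theta_le hy (fun t ht ↦ (htheta t (by linarith [ht.1])).le)
          (fun t ht ↦ hasDerivAt_rpow_sub_one_div_log s (hone_lt t ht))
          ((continuousOn_rpow_mul_log_sub_one_div_log_sq s).mono hone_lt)
          (fun t ht ↦ rpow_mul_log_sub_one_div_log_sq_nonpos hs1 (hone_lt t ht))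
          (div_nonneg (by positivity) (log_nonneg (by linarith)))
    _ = (1 + 2.3e-8) * (Li (y ^ s) - Li (2 ^ s) + 2 ^ s / log 2) := by
        rw [integral_rpow_sub_one_div_log hs0 one_lt_two (by linarith), rpow_sub_one two_ne_zero]
        ring
end
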